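/- arXiv:2003.09522 — 2 statements merged into one kernel-verified Lean document; each statement's English description precedes it below -/
import Mathlib

section
/- Soundness and completeness of RmbC(Ax) with respect to BI(Ax): let Ax be any set formed by one or more of the axiom schemas (ciw), (ci), (cl), (cf), (ce), (ca∧), (ca∨), (ca→). For every set of formulas Γ ∪ {φ} over Σ, Γ ⊢_{RmbC(Ax)} φ if and only if Γ ⊨_{BI(Ax)} φ. -/
namespace LFI

/-- Formulas over the propositional signature Σ = {∧,∨,→,¬,∘}:
`neg` is the paraconsistent negation ¬ and `circ` the consistency operator ∘. -/
inductive Formula : Type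
  | var : ℕ → Formula
  | and : Formula → Formula → Formula
  | or : Formula → Formula → Formula
  | imp : Formula → Formula → Formula
  | neg : Formula → Formula
  | circ : Formula → Formula

namespace Formula

/-- `α ↔ β` abbreviates `(α→β) ∧ (β→α)`. -/
def iffF (a b : Formula) : Formula := and (imp a b) (imp b a)

/-- Conjunction `γ ∧ γ₁ ∧ … ∧ γₙ` of the nonempty list `γ :: l` (right-associated). -/
def conjL (γ : Formula) : List Formula → Formula
  | [] => γ
  | ψ :: l => and γ (conjL ψ l)

/-- `subst p α γ` is `γ[p/α]`: the result of replacing every occurrence of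
the propositional variable `p` in `γ` by `α`. -/
def subst (p : ℕ) (α : Formula) : Formula → Formula
  | var q => if q = p then α else var q
  | and a b => and (subst p α a) (subst p α b)
  | or a b => or (subst p α a) (subst p α b)
  | imp a b => imp (subst p α a) (subst p α b)
  | neg a => neg (subst p α a)
  | circ a => circ (subst p α a)

end Formula

open Formula

/-- Theoremhood for the Hilbert calculus `RmbC` (axioms Ax1–Ax10 of CPL⁺ plus (bc1),
modus ponens and the replacement rules (R¬), (R∘)) extended with an arbitrary set `Ax`
of extra axiom(-schema instance)s.  `Prf ∅` is theoremhood in RmbC itself. -/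
inductive Prf (Ax : Set Formula) : Formula → Prop
  | ax1 (a b : Formula) : Prf Ax (imp a (imp b a))
  | ax2 (a b c : Formula) :
      Prf Ax (imp (imp a (imp b c)) (imp (imp a b) (imp a c)))
  | ax3 (a b : Formula) : Prf Ax (imp a (imp b (and a b)))
  | ax4 (a b : Formula) : Prf Ax (imp (and a b) a)
  | ax5 (a b : Formula) : Prf Ax (imp (and a b) b)
  | ax6 (a b : Formula) : Prf Ax (imp a (or a b))
  | ax7 (a b : Formula) : Prf Ax (imp b (or a b))
  | ax8 (a b c : Formula) :
      Prf Ax (imp (imp a c) (imp (imp b c) (imp (or a b) c)))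
  | ax9 (a b : Formula) : Prf Ax (or (imp a b) a)
  | ax10 (a : Formula) : Prf Ax (or a (neg a))
  | bc1 (a b : Formula) : Prf Ax (imp (circ a) (imp a (imp (neg a) b)))
  | ext {a : Formula} : a ∈ Ax → Prf Ax a
  | mp {a b : Formula} : Prf Ax (imp a b) → Prf Ax a → Prf Ax b
  | rneg {a b : Formula} : Prf Ax (iffF a b) → Prf Ax (iffF (neg a) (neg b))
  | rcirc {a b : Formula} : Prf Ax (iffF a b) → Prf Ax (iffF (circ a) (circ b))

/-- Local derivation from premises: `Γ ⊢ φ` iff `φ` is a theorem, or there is a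
finite nonempty subset `{γ, γ₁, …, γₙ} ⊆ Γ` with `⊢ (γ ∧ γ₁ ∧ … ∧ γₙ) → φ`. -/
def Deriv (Ax Γ : Set Formula) (φ : Formula) : Prop :=
  Prf Ax φ ∨ ∃ (γ : Formula) (l : List Formula),
    γ ∈ Γ ∧ (∀ ψ ∈ l, ψ ∈ Γ) ∧ Prf Ax (imp (conjL γ l) φ)

/-- The conditions making unary operations `nB` (¬) and `cB` (∘) on a Boolean algebra
into LFI operators: `a ∨ ¬a = 1` and `a ∧ ¬a ∧ ∘a = 0`.  A BALFI is a Boolean algebra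
equipped with two such operations. -/
def IsBALFI {A : Type*} [BooleanAlgebra A] (nB cB : A → A) : Prop :=
  (∀ a : A, a ⊔ nB a = ⊤) ∧ (∀ a : A, a ⊓ nB a ⊓ cB a = ⊥)

/-- The valuation (Σ-homomorphism) on a BALFI determined by the assignment `d` of
values to propositional variables;  `→` is interpreted as Boolean implication `aᶜ ⊔ b`. -/
def eval {A : Type*} [BooleanAlgebra A] (nB cB : A → A) (d : ℕ → A) : Formula → A
  | .var n => d n
  | .and a b => eval nB cB d a ⊓ eval nB cB d b
  | .or a b => eval nB cB d a ⊔ eval nB cB d b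
  | .imp a b => (eval nB cB d a)ᶜ ⊔ eval nB cB d b
  | .neg a => nB (eval nB cB d a)
  | .circ a => cB (eval nB cB d a)

/-- Instances of the schema (ciw): `∘α ∨ (α ∧ ¬α)`. -/
def ciwSet : Set Formula := { f | ∃ a, f = .or (.circ a) (.and a (.neg a)) }
/-- Instances of the schema (ci): `¬∘α → (α ∧ ¬α)`. -/
def ciSet : Set Formula := { f | ∃ a, f = .imp (.neg (.circ a)) (.and a (.neg a)) }
/-- Instances of the schema (cl): `¬(α ∧ ¬α) → ∘α`. -/
def clSet : Set Formula := { f | ∃ a, f = .imp (.neg (.and a (.neg a))) (.circ a) }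
/-- Instances of the schema (cf): `¬¬α → α`. -/
def cfSet : Set Formula := { f | ∃ a, f = .imp (.neg (.neg a)) a }
/-- Instances of the schema (ce): `α → ¬¬α`. -/
def ceSet : Set Formula := { f | ∃ a, f = .imp a (.neg (.neg a)) }
/-- Instances of the schema (ca∧): `(∘α ∧ ∘β) → ∘(α ∧ β)`. -/
def caAndSet : Set Formula :=
  { f | ∃ a b, f = .imp (.and (.circ a) (.circ b)) (.circ (.and a b)) }
/-- Instances of the schema (ca∨): `(∘α ∧ ∘β) → ∘(α ∨ β)`. -/
def caOrSet : Set Formula :=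
  { f | ∃ a b, f = .imp (.and (.circ a) (.circ b)) (.circ (.or a b)) }
/-- Instances of the schema (ca→): `(∘α ∧ ∘β) → ∘(α → β)`. -/
def caImpSet : Set Formula :=
  { f | ∃ a b, f = .imp (.and (.circ a) (.circ b)) (.circ (.imp a b)) }

/-- The eight extension axiom schemas of Definition 3.1. -/
inductive Schema : Type
  | ciw | ci | cl | cf | ce | caAnd | caOr | caImp

/-- The set of instances of a schema. -/
def Schema.instSet : Schema → Set Formula
  | .ciw => ciwSet
  | .ci => ciSet
  | .cl => clSet
  | .cf => cfSet
  | .ce => ceSet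
  | .caAnd => caAndSet
  | .caOr => caOrSet
  | .caImp => caImpSet

/-- The BALFI `(A, nB, cB)` is a model of every formula in `S` (as axiom schema
instances): all of them take value `⊤` under every valuation. -/
def ModelsSet {A : Type*} [BooleanAlgebra A] (nB cB : A → A) (S : Set Formula) : Prop :=
  ∀ ψ ∈ S, ∀ d : ℕ → A, eval nB cB d ψ = ⊤

/-- Validity in the class BI(Ax) of all BALFIs which are models of every formula in `Ax`. -/
def BIValidExt (Ax : Set Formula) (φ : Formula) : Prop :=
  ∀ (A : Type) [BooleanAlgebra A], ∀ nB cB : A → A, IsBALFI nB cB →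
    ModelsSet nB cB Ax → ∀ d : ℕ → A, eval nB cB d φ = ⊤

/-- Local (degree-preserving) consequence over the class BI(Ax). -/
def BIConseqExt (Ax Γ : Set Formula) (φ : Formula) : Prop :=
  BIValidExt Ax φ ∨ ∃ (γ : Formula) (l : List Formula), γ ∈ Γ ∧ (∀ ψ ∈ l, ψ ∈ Γ) ∧
    ∀ (A : Type) [BooleanAlgebra A], ∀ nB cB : A → A, IsBALFI nB cB →
      ModelsSet nB cB Ax →
      ∀ d : ℕ → A, eval nB cB d (Formula.conjL γ l) ≤ eval nB cB d φ

/-! ## Auxiliary calculus with hypotheses -/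

inductive PrfC (Ax : Set Formula) (Γ : Set Formula) : Formula → Prop
  | ax1 (a b : Formula) : PrfC Ax Γ (imp a (imp b a))
  | ax2 (a b c : Formula) :
      PrfC Ax Γ (imp (imp a (imp b c)) (imp (imp a b) (imp a c)))
  | ax3 (a b : Formula) : PrfC Ax Γ (imp a (imp b (and a b)))
  | ax4 (a b : Formula) : PrfC Ax Γ (imp (and a b) a)
  | ax5 (a b : Formula) : PrfC Ax Γ (imp (and a b) b)
  | ax6 (a b : Formula) : PrfC Ax Γ (imp a (or a b))
  | ax7 (a b : Formula) : PrfC Ax Γ (imp b (or a b))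
  | ax8 (a b c : Formula) :
      PrfC Ax Γ (imp (imp a c) (imp (imp b c) (imp (or a b) c)))
  | ax9 (a b : Formula) : PrfC Ax Γ (or (imp a b) a)
  | ax10 (a : Formula) : PrfC Ax Γ (or a (neg a))
  | bc1 (a b : Formula) : PrfC Ax Γ (imp (circ a) (imp a (imp (neg a) b)))
  | hyp {a : Formula} : a ∈ Γ → PrfC Ax Γ a
  | mp {a b : Formula} : PrfC Ax Γ (imp a b) → PrfC Ax Γ a → PrfC Ax Γ b

namespace PrfC

variable {Ax Γ Δ : Set Formula} {a b c : Formula}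

theorem weak (h : PrfC Ax Γ a) (hs : Γ ⊆ Δ) : PrfC Ax Δ a := by
  induction h with
  | ax1 a b => exact .ax1 a b
  | ax2 a b c => exact .ax2 a b c
  | ax3 a b => exact .ax3 a b
  | ax4 a b => exact .ax4 a b
  | ax5 a b => exact .ax5 a b
  | ax6 a b => exact .ax6 a b
  | ax7 a b => exact .ax7 a b
  | ax8 a b c => exact .ax8 a b c
  | ax9 a b => exact .ax9 a b
  | ax10 a => exact .ax10 a
  | bc1 a b => exact .bc1 a b
  | hyp h => exact .hyp (hs h)
  | mp _ _ ih1 ih2 => exact .mp ih1 ih2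

theorem idF : PrfC Ax Γ (imp a a) :=
  .mp (.mp (.ax2 a (imp a a) a) (.ax1 a (imp a a))) (.ax1 a a)

theorem ded (h : PrfC Ax (insert a Γ) b) : PrfC Ax Γ (imp a b) := by
  induction h with
  | ax1 x y => exact .mp (.ax1 _ _) (.ax1 x y)
  | ax2 x y z => exact .mp (.ax1 _ _) (.ax2 x y z)
  | ax3 x y => exact .mp (.ax1 _ _) (.ax3 x y)
  | ax4 x y => exact .mp (.ax1 _ _) (.ax4 x y)
  | ax5 x y => exact .mp (.ax1 _ _) (.ax5 x y)
  | ax6 x y => exact .mp (.ax1 _ _) (.ax6 x y)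
  | ax7 x y => exact .mp (.ax1 _ _) (.ax7 x y)
  | ax8 x y z => exact .mp (.ax1 _ _) (.ax8 x y z)
  | ax9 x y => exact .mp (.ax1 _ _) (.ax9 x y)
  | ax10 x => exact .mp (.ax1 _ _) (.ax10 x)
  | bc1 x y => exact .mp (.ax1 _ _) (.bc1 x y)
  | hyp h =>
      rcases h with h | h
      · exact h ▸ idF
      · exact .mp (.ax1 _ _) (.hyp h)
  | mp _ _ ih1 ih2 => exact .mp (.mp (.ax2 _ _ _) ih1) ih2

/-- or-elimination with hypotheses -/
theorem orE (hab : PrfC Ax Γ (or a b)) (ha : PrfC Ax (insert a Γ) c)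
    (hb : PrfC Ax (insert b Γ) c) : PrfC Ax Γ c :=
  .mp (.mp (.mp (.ax8 a b c) ha.ded) hb.ded) hab

end PrfC

theorem PrfC.toPrf {Ax : Set Formula} {a : Formula} (h : PrfC Ax ∅ a) : Prf Ax a := by
  induction h with
  | ax1 a b => exact .ax1 a b
  | ax2 a b c => exact .ax2 a b c
  | ax3 a b => exact .ax3 a b
  | ax4 a b => exact .ax4 a b
  | ax5 a b => exact .ax5 a b
  | ax6 a b => exact .ax6 a b
  | ax7 a b => exact .ax7 a b
  | ax8 a b c => exact .ax8 a b c
  | ax9 a b => exact .ax9 a b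
  | ax10 a => exact .ax10 a
  | bc1 a b => exact .bc1 a b
  | hyp h => exact absurd h (Set.notMem_empty _)
  | mp _ _ ih1 ih2 => exact .mp ih1 ih2

/-! ## Tautology toolkit at the `Prf` level -/

section Taut
variable {Ax : Set Formula} {a b c a' b' : Formula}

theorem tId : Prf Ax (imp a a) := PrfC.toPrf PrfC.idF

theorem tComp (h1 : Prf Ax (imp a b)) (h2 : Prf Ax (imp b c)) : Prf Ax (imp a c) := by
  have t : Prf Ax (imp (imp a b) (imp (imp b c) (imp a c))) := by
    apply PrfC.toPrf; apply PrfC.ded; apply PrfC.ded; apply PrfC.ded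
    set Γ : Set Formula := insert a (insert (imp b c) (insert (imp a b) ∅)) with hΓ
    have g1 : PrfC Ax Γ (imp a b) := .hyp (by simp [hΓ])
    have g2 : PrfC Ax Γ (imp b c) := .hyp (by simp [hΓ])
    have g3 : PrfC Ax Γ a := .hyp (by simp [hΓ])
    exact .mp g2 (.mp g1 g3)
  exact .mp (.mp t h1) h2

theorem tIff (h1 : Prf Ax (imp a b)) (h2 : Prf Ax (imp b a)) : Prf Ax (iffF a b) :=
  .mp (.mp (.ax3 _ _) h1) h2

theorem tIff1 (h : Prf Ax (iffF a b)) : Prf Ax (imp a b) := .mp (.ax4 _ _) h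
theorem tIff2 (h : Prf Ax (iffF a b)) : Prf Ax (imp b a) := .mp (.ax5 _ _) h

theorem tLeInf (h1 : Prf Ax (imp c a)) (h2 : Prf Ax (imp c b)) :
    Prf Ax (imp c (and a b)) := by
  have t : Prf Ax (imp (imp c a) (imp (imp c b) (imp c (and a b)))) := by
    apply PrfC.toPrf; apply PrfC.ded; apply PrfC.ded; apply PrfC.ded
    set Γ : Set Formula := insert c (insert (imp c b) (insert (imp c a) ∅)) with hΓ
    have g1 : PrfC Ax Γ (imp c a) := .hyp (by simp [hΓ])
    have g2 : PrfC Ax Γ (imp c b) := .hyp (by simp [hΓ])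
    have g3 : PrfC Ax Γ c := .hyp (by simp [hΓ])
    exact .mp (.mp (.ax3 a b) (.mp g1 g3)) (.mp g2 g3)
  exact .mp (.mp t h1) h2

theorem tSupLe (h1 : Prf Ax (imp a c)) (h2 : Prf Ax (imp b c)) :
    Prf Ax (imp (or a b) c) := .mp (.mp (.ax8 a b c) h1) h2

theorem tMonoOr (h1 : Prf Ax (imp a a')) (h2 : Prf Ax (imp b b')) :
    Prf Ax (imp (or a b) (or a' b')) :=
  tSupLe (tComp h1 (.ax6 _ _)) (tComp h2 (.ax7 _ _))

theorem tMonoAnd (h1 : Prf Ax (imp a a')) (h2 : Prf Ax (imp b b')) :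
    Prf Ax (imp (and a b) (and a' b')) :=
  tLeInf (tComp (.ax4 _ _) h1) (tComp (.ax5 _ _) h2)

theorem tMonoImp (h1 : Prf Ax (imp a' a)) (h2 : Prf Ax (imp b b')) :
    Prf Ax (imp (imp a b) (imp a' b')) := by
  have t : Prf Ax (imp (imp a' a) (imp (imp b b') (imp (imp a b) (imp a' b')))) := by
    apply PrfC.toPrf; apply PrfC.ded; apply PrfC.ded; apply PrfC.ded; apply PrfC.ded
    set Γ : Set Formula :=
      insert a' (insert (imp a b) (insert (imp b b') (insert (imp a' a) ∅))) with hΓ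
    have g1 : PrfC Ax Γ (imp a' a) := .hyp (by simp [hΓ])
    have g2 : PrfC Ax Γ (imp b b') := .hyp (by simp [hΓ])
    have g3 : PrfC Ax Γ (imp a b) := .hyp (by simp [hΓ])
    have g4 : PrfC Ax Γ a' := .hyp (by simp [hΓ])
    exact .mp g2 (.mp g3 (.mp g1 g4))
  exact .mp (.mp t h1) h2

/-- distributivity: `(a∨b)∧(a∨c) → a∨(b∧c)` -/
theorem tDistrib : Prf Ax (imp (and (or a b) (or a c)) (or a (and b c))) := by
  apply PrfC.toPrf; apply PrfC.ded
  have h0 : PrfC Ax (insert (and (or a b) (or a c)) ∅) (and (or a b) (or a c)) :=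
    .hyp (Set.mem_insert _ _)
  have hab : PrfC Ax (insert (and (or a b) (or a c)) ∅) (or a b) := .mp (.ax4 _ _) h0
  have hac : PrfC Ax (insert (and (or a b) (or a c)) ∅) (or a c) := .mp (.ax5 _ _) h0
  refine hab.orE (.mp (.ax6 _ _) (.hyp (Set.mem_insert _ _))) ?_
  refine (hac.weak (Set.subset_insert _ _)).orE
    (.mp (.ax6 _ _) (.hyp (Set.mem_insert _ _))) ?_
  refine .mp (.ax7 _ _) (.mp (.mp (.ax3 b c) (.hyp ?_)) (.hyp (Set.mem_insert _ _)))
  exact Set.mem_insert_of_mem _ (Set.mem_insert _ _)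

/-- canonical bottom and top formulas -/
def bot0 : Formula := and (and (var 0) (neg (var 0))) (circ (var 0))
def top0 : Formula := imp (var 0) (var 0)

theorem cBotLe {Γ : Set Formula} : PrfC Ax Γ (imp bot0 c) := by
  apply PrfC.ded
  have h0 : PrfC Ax (insert bot0 Γ) bot0 := .hyp (Set.mem_insert _ _)
  have hp : PrfC Ax (insert bot0 Γ) (var 0) := .mp (.ax4 _ _) (.mp (.ax4 _ _) h0)
  have hn : PrfC Ax (insert bot0 Γ) (neg (var 0)) := .mp (.ax5 _ _) (.mp (.ax4 _ _) h0)
  have hc : PrfC Ax (insert bot0 Γ) (circ (var 0)) := .mp (.ax5 _ _) h0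
  exact .mp (.mp (.mp (.bc1 (var 0) c) hc) hp) hn

theorem tBotLe : Prf Ax (imp bot0 c) := PrfC.toPrf cBotLe

theorem tTop : Prf Ax top0 := tId
theorem tLeTop : Prf Ax (imp c top0) := .mp (.ax1 _ _) tTop

/-- `((a∧¬a)∧∘a) → b` from (bc1) -/
theorem tBc1' : Prf Ax (imp (and (and a (neg a)) (circ a)) b) := by
  apply PrfC.toPrf; apply PrfC.ded
  set Γ : Set Formula := insert (and (and a (neg a)) (circ a)) ∅
  have h0 : PrfC Ax Γ (and (and a (neg a)) (circ a)) := .hyp (Set.mem_insert _ _)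
  have hp : PrfC Ax Γ a := .mp (.ax4 _ _) (.mp (.ax4 _ _) h0)
  have hn : PrfC Ax Γ (neg a) := .mp (.ax5 _ _) (.mp (.ax4 _ _) h0)
  have hc : PrfC Ax Γ (circ a) := .mp (.ax5 _ _) h0
  exact .mp (.mp (.mp (.bc1 a b) hc) hp) hn

/-- `(a→b) → ((a→⊥)∨b)` -/
theorem tImpOr : Prf Ax (imp (imp a b) (or (imp a bot0) b)) := by
  apply PrfC.toPrf; apply PrfC.ded
  have h9 : PrfC Ax (insert (imp a b) ∅) (or (imp a bot0) a) := .ax9 a bot0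
  refine h9.orE (.mp (.ax6 _ _) (.hyp (Set.mem_insert _ _))) ?_
  refine .mp (.ax7 _ _) (.mp (.hyp ?_) (.hyp (Set.mem_insert _ _)))
  exact Set.mem_insert_of_mem _ (Set.mem_insert _ _)

/-- `((a→⊥)∨b) → (a→b)` -/
theorem tOrImp : Prf Ax (imp (or (imp a bot0) b) (imp a b)) := by
  apply PrfC.toPrf; apply PrfC.ded
  have h0 : PrfC Ax (insert (or (imp a bot0) b) ∅) (or (imp a bot0) b) :=
    .hyp (Set.mem_insert _ _)
  refine h0.orE ?_ ?_
  · apply PrfC.ded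
    refine .mp cBotLe (.mp (.hyp ?_) (.hyp (Set.mem_insert _ _)))
    exact Set.mem_insert_of_mem _ (Set.mem_insert _ _)
  · exact .mp (.ax1 _ _) (.hyp (Set.mem_insert _ _))

/-- `⊤ → (a ∨ (a→⊥))` -/
theorem tLem : Prf Ax (imp top0 (or a (imp a bot0))) :=
  .mp (.ax1 _ _) (.mp (tSupLe (.ax7 _ _) (.ax6 _ _)) (.ax9 a bot0))

theorem tLem10 : Prf Ax (imp top0 (or a (neg a))) := .mp (.ax1 _ _) (.ax10 a)

end Taut

/-! ## Lindenbaum–Tarski algebra -/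

def lindSetoid (Ax : Set Formula) : Setoid Formula where
  r a b := Prf Ax (iffF a b)
  iseqv := ⟨fun _ => tIff tId tId, fun h => tIff (tIff2 h) (tIff1 h),
    fun h1 h2 => tIff (tComp (tIff1 h1) (tIff1 h2)) (tComp (tIff2 h2) (tIff2 h1))⟩

def Lind (Ax : Set Formula) : Type := Quotient (lindSetoid Ax)

variable {Ax : Set Formula}

def Lmk (Ax : Set Formula) (a : Formula) : Lind Ax := Quotient.mk (lindSetoid Ax) a

theorem Lind.sound {a b : Formula} (h : Prf Ax (iffF a b)) : Lmk Ax a = Lmk Ax b :=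
  Quotient.sound h

theorem Lind.exact {a b : Formula} (h : Lmk Ax a = Lmk Ax b) : Prf Ax (iffF a b) :=
  Quotient.exact h

instance : PartialOrder (Lind Ax) where
  le := Quotient.lift₂ (fun a b => Prf Ax (imp a b)) (by
    intro a b a' b' ha hb
    exact propext ⟨fun h => tComp (tIff2 ha) (tComp h (tIff1 hb)),
      fun h => tComp (tIff1 ha) (tComp h (tIff2 hb))⟩)
  le_refl x := Quotient.inductionOn x (fun a => (tId : Prf Ax (imp a a)))
  le_trans x y z := Quotient.inductionOn₃ x y z (fun _ _ _ h1 h2 => tComp h1 h2)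
  le_antisymm x y := Quotient.inductionOn₂ x y
    (fun _ _ h1 h2 => Quotient.sound (tIff h1 h2))

theorem Lle_iff {a b : Formula} : Lmk Ax a ≤ Lmk Ax b ↔ Prf Ax (imp a b) := Iff.rfl

instance : Lattice (Lind Ax) where
  sup := Quotient.lift₂ (fun a b => Lmk Ax (or a b)) (by
    intro a b a' b' ha hb
    exact Quotient.sound (tIff (tMonoOr (tIff1 ha) (tIff1 hb))
      (tMonoOr (tIff2 ha) (tIff2 hb))))
  inf := Quotient.lift₂ (fun a b => Lmk Ax (and a b)) (by
    intro a b a' b' ha hb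
    exact Quotient.sound (tIff (tMonoAnd (tIff1 ha) (tIff1 hb))
      (tMonoAnd (tIff2 ha) (tIff2 hb))))
  le_sup_left x y := Quotient.inductionOn₂ x y (fun a b => (Prf.ax6 a b))
  le_sup_right x y := Quotient.inductionOn₂ x y (fun a b => (Prf.ax7 a b))
  sup_le x y z := Quotient.inductionOn₃ x y z (fun _ _ _ h1 h2 => tSupLe h1 h2)
  inf_le_left x y := Quotient.inductionOn₂ x y (fun a b => (Prf.ax4 a b))
  inf_le_right x y := Quotient.inductionOn₂ x y (fun a b => (Prf.ax5 a b))
  le_inf x y z := Quotient.inductionOn₃ x y z (fun _ _ _ h1 h2 => tLeInf h1 h2)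

theorem Lsup_mk {a b : Formula} : Lmk Ax a ⊔ Lmk Ax b = Lmk Ax (or a b) := rfl
theorem Linf_mk {a b : Formula} : Lmk Ax a ⊓ Lmk Ax b = Lmk Ax (and a b) := rfl

instance : DistribLattice (Lind Ax) where
  le_sup_inf x y z := Quotient.inductionOn₃ x y z (fun _ _ _ => tDistrib)

instance : BooleanAlgebra (Lind Ax) where
  compl := Quotient.lift (fun a => Lmk Ax (imp a bot0)) (by
    intro a a' ha
    exact Quotient.sound (tIff (tMonoImp (tIff2 ha) tId) (tMonoImp (tIff1 ha) tId)))
  top := Lmk Ax top0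
  bot := Lmk Ax bot0
  le_top x := Quotient.inductionOn x (fun _ => tLeTop)
  bot_le x := Quotient.inductionOn x (fun _ => tBotLe)
  inf_compl_le_bot x := Quotient.inductionOn x (fun a => by
    show Prf Ax (imp (and a (imp a bot0)) bot0)
    apply PrfC.toPrf; apply PrfC.ded
    have h0 : PrfC Ax (insert (and a (imp a bot0)) ∅) (and a (imp a bot0)) :=
      .hyp (Set.mem_insert _ _)
    exact .mp (.mp (.ax5 _ _) h0) (.mp (.ax4 _ _) h0))
  top_le_sup_compl x := Quotient.inductionOn x (fun a => tLem)

theorem Lcompl_mk {a : Formula} : (Lmk Ax a)ᶜ = Lmk Ax (imp a bot0) := rfl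
theorem Ltop_mk : (⊤ : Lind Ax) = Lmk Ax top0 := rfl
theorem Lbot_mk : (⊥ : Lind Ax) = Lmk Ax bot0 := rfl

theorem Lmk_eq_top_iff {a : Formula} : Lmk Ax a = ⊤ ↔ Prf Ax a := by
  constructor
  · intro h
    exact .mp (tIff2 (Lind.exact (h.trans Ltop_mk))) tTop
  · intro h
    exact le_antisymm le_top ((Lle_iff).2 (.mp (.ax1 _ _) h))

def negL (Ax : Set Formula) : Lind Ax → Lind Ax :=
  Quotient.lift (fun a => Lmk Ax (neg a)) (fun _ _ h => Quotient.sound (Prf.rneg h))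

def circL (Ax : Set Formula) : Lind Ax → Lind Ax :=
  Quotient.lift (fun a => Lmk Ax (circ a)) (fun _ _ h => Quotient.sound (Prf.rcirc h))

/-! ## Lindenbaum algebra is a BALFI; evaluation computes substitution -/

theorem lind_isBALFI : IsBALFI (negL Ax) (circL Ax) := by
  constructor
  · intro x
    refine Quotient.inductionOn x (fun a => ?_)
    show Lmk Ax (or a (neg a)) = ⊤
    exact Lmk_eq_top_iff.2 (.ax10 a)
  · intro x
    refine Quotient.inductionOn x (fun a => ?_)
    show Lmk Ax (and (and a (neg a)) (circ a)) = ⊥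
    exact le_antisymm ((Lle_iff).2 tBc1') bot_le

def substAll (σ : ℕ → Formula) : Formula → Formula
  | .var n => σ n
  | .and a b => .and (substAll σ a) (substAll σ b)
  | .or a b => .or (substAll σ a) (substAll σ b)
  | .imp a b => .imp (substAll σ a) (substAll σ b)
  | .neg a => .neg (substAll σ a)
  | .circ a => .circ (substAll σ a)

theorem substAll_var (ψ : Formula) : substAll Formula.var ψ = ψ := by
  induction ψ with
  | var n => rfl
  | and a b iha ihb => simp [substAll, iha, ihb]
  | or a b iha ihb => simp [substAll, iha, ihb]
  | imp a b iha ihb => simp [substAll, iha, ihb]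
  | neg a iha => simp [substAll, iha]
  | circ a iha => simp [substAll, iha]

theorem eval_lind (σ : ℕ → Formula) (ψ : Formula) :
    eval (negL Ax) (circL Ax) (fun n => Lmk Ax (σ n)) ψ = Lmk Ax (substAll σ ψ) := by
  induction ψ with
  | var n => rfl
  | and a b iha ihb => show _ ⊓ _ = _; rw [iha, ihb]; rfl
  | or a b iha ihb => show _ ⊔ _ = _; rw [iha, ihb]; rfl
  | imp a b iha ihb =>
      show (_)ᶜ ⊔ _ = _
      rw [iha, ihb, Lcompl_mk, Lsup_mk]
      exact Lind.sound (tIff tOrImp tImpOr)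
  | neg a iha => show negL Ax _ = _; rw [iha]; rfl
  | circ a iha => show circL Ax _ = _; rw [iha]; rfl

/-! ## Soundness -/

section Sound
variable {A : Type*} [BooleanAlgebra A] {nB cB : A → A}

theorem eval_imp' (d : ℕ → A) (a b : Formula) :
    eval nB cB d (imp a b) = eval nB cB d a ⇨ eval nB cB d b := by
  show (eval nB cB d a)ᶜ ⊔ eval nB cB d b = _
  rw [himp_eq, sup_comm]

theorem eval_top_mono {x y : A} (himp_top : x ⇨ y = ⊤) (hx : x = ⊤) : y = ⊤ :=
  top_le_iff.1 (hx ▸ himp_eq_top_iff.1 himp_top)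

theorem soundness {Ax : Set Formula} (hB : IsBALFI nB cB) (hM : ModelsSet nB cB Ax)
    {φ : Formula} (h : Prf Ax φ) : ∀ d : ℕ → A, eval nB cB d φ = ⊤ := by
  induction h with
  | ax1 a b =>
      intro d; rw [eval_imp', eval_imp', himp_eq_top_iff, le_himp_iff]
      exact inf_le_left
  | ax2 a b c =>
      intro d
      rw [eval_imp', eval_imp', eval_imp', eval_imp', eval_imp', eval_imp',
        himp_eq_top_iff, le_himp_iff, le_himp_iff]
      set x := eval nB cB d a; set y := eval nB cB d b; set z := eval nB cB d c
      have h1 : (x ⇨ y ⇨ z) ⊓ (x ⇨ y) ⊓ x ≤ y ⇨ z :=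
        le_trans (inf_le_inf_right x inf_le_left) himp_inf_le
      have h2 : (x ⇨ y ⇨ z) ⊓ (x ⇨ y) ⊓ x ≤ y :=
        le_trans (inf_le_inf_right x inf_le_right) himp_inf_le
      exact le_trans (le_inf h1 h2) himp_inf_le
  | ax3 a b =>
      intro d
      rw [eval_imp', eval_imp', show eval nB cB d (and a b) =
        eval nB cB d a ⊓ eval nB cB d b from rfl, himp_eq_top_iff, le_himp_iff]
  | ax4 a b =>
      intro d; rw [eval_imp', himp_eq_top_iff]; exact inf_le_left
  | ax5 a b =>
      intro d; rw [eval_imp', himp_eq_top_iff]; exact inf_le_right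
  | ax6 a b =>
      intro d; rw [eval_imp', himp_eq_top_iff]; exact le_sup_left
  | ax7 a b =>
      intro d; rw [eval_imp', himp_eq_top_iff]; exact le_sup_right
  | ax8 a b c =>
      intro d
      rw [eval_imp', eval_imp', eval_imp', eval_imp', eval_imp',
        himp_eq_top_iff, le_himp_iff, le_himp_iff]
      set x := eval nB cB d a; set y := eval nB cB d b; set z := eval nB cB d c
      show (x ⇨ z) ⊓ (y ⇨ z) ⊓ (x ⊔ y) ≤ z
      rw [inf_sup_left]
      refine sup_le ?_ ?_
      · exact le_trans (inf_le_inf_right x inf_le_left) himp_inf_le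
      · exact le_trans (inf_le_inf_right y inf_le_right) himp_inf_le
  | ax9 a b =>
      intro d
      show eval nB cB d (imp a b) ⊔ eval nB cB d a = ⊤
      rw [eval_imp']
      refine top_le_iff.1 ?_
      rw [← compl_sup_eq_top (x := eval nB cB d a)]
      exact sup_le_sup_right compl_le_himp _
  | ax10 a =>
      intro d; exact hB.1 _
  | bc1 a b =>
      intro d
      rw [eval_imp', eval_imp', eval_imp', himp_eq_top_iff, le_himp_iff, le_himp_iff]
      set x := eval nB cB d a
      show cB x ⊓ x ⊓ nB x ≤ eval nB cB d b
      have : cB x ⊓ x ⊓ nB x = x ⊓ nB x ⊓ cB x := by ac_rfl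
      rw [this, hB.2 x]
      exact bot_le
  | ext h => exact hM _ h
  | mp _ _ ih1 ih2 =>
      intro d
      exact eval_top_mono (by rw [← eval_imp']; exact ih1 d) (ih2 d)
  | @rneg a b _ ih =>
      intro d
      have h2 := ih d
      rw [show eval nB cB d (iffF a b) =
          eval nB cB d (imp a b) ⊓ eval nB cB d (imp b a) from rfl,
        inf_eq_top_iff, eval_imp', eval_imp', himp_eq_top_iff, himp_eq_top_iff] at h2
      have hab : eval nB cB d a = eval nB cB d b := le_antisymm h2.1 h2.2
      have h3 : eval nB cB d (iffF (neg a) (neg b)) =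
          (nB (eval nB cB d a) ⇨ nB (eval nB cB d b)) ⊓
            (nB (eval nB cB d b) ⇨ nB (eval nB cB d a)) := by
        rw [show eval nB cB d (iffF (neg a) (neg b)) =
            eval nB cB d (imp (neg a) (neg b)) ⊓ eval nB cB d (imp (neg b) (neg a)) from rfl,
          eval_imp', eval_imp']
        rfl
      rw [h3, hab]; simp
  | @rcirc a b _ ih =>
      intro d
      have h2 := ih d
      rw [show eval nB cB d (iffF a b) =
          eval nB cB d (imp a b) ⊓ eval nB cB d (imp b a) from rfl,
        inf_eq_top_iff, eval_imp', eval_imp', himp_eq_top_iff, himp_eq_top_iff] at h2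
      have hab : eval nB cB d a = eval nB cB d b := le_antisymm h2.1 h2.2
      have h3 : eval nB cB d (iffF (circ a) (circ b)) =
          (cB (eval nB cB d a) ⇨ cB (eval nB cB d b)) ⊓
            (cB (eval nB cB d b) ⇨ cB (eval nB cB d a)) := by
        rw [show eval nB cB d (iffF (circ a) (circ b)) =
            eval nB cB d (imp (circ a) (circ b)) ⊓ eval nB cB d (imp (circ b) (circ a)) from rfl,
          eval_imp', eval_imp']
        rfl
      rw [h3, hab]; simp

end Sound

/-! ## Schema instance sets are closed under substitution -/

theorem instSet_substAll (s : Schema) (σ : ℕ → Formula) {ψ : Formula}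
    (h : ψ ∈ s.instSet) : substAll σ ψ ∈ s.instSet := by
  cases s <;> simp only [Schema.instSet, ciwSet, ciSet, clSet, cfSet, ceSet,
    caAndSet, caOrSet, caImpSet, Set.mem_setOf_eq] at h ⊢
  case ciw => obtain ⟨a, rfl⟩ := h; exact ⟨substAll σ a, rfl⟩
  case ci => obtain ⟨a, rfl⟩ := h; exact ⟨substAll σ a, rfl⟩
  case cl => obtain ⟨a, rfl⟩ := h; exact ⟨substAll σ a, rfl⟩
  case cf => obtain ⟨a, rfl⟩ := h; exact ⟨substAll σ a, rfl⟩
  case ce => obtain ⟨a, rfl⟩ := h; exact ⟨substAll σ a, rfl⟩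
  case caAnd => obtain ⟨a, b, rfl⟩ := h; exact ⟨substAll σ a, substAll σ b, rfl⟩
  case caOr => obtain ⟨a, b, rfl⟩ := h; exact ⟨substAll σ a, substAll σ b, rfl⟩
  case caImp => obtain ⟨a, b, rfl⟩ := h; exact ⟨substAll σ a, substAll σ b, rfl⟩

/-! ## The Lindenbaum algebra is a model of the axiom set -/

theorem lind_modelsSet (S : Set Schema) :
    ModelsSet (negL (⋃ s ∈ S, s.instSet)) (circL (⋃ s ∈ S, s.instSet))
      (⋃ s ∈ S, s.instSet) := by
  set Ax : Set Formula := ⋃ s ∈ S, s.instSet with hAx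
  intro ψ hψ d
  obtain ⟨σ, hσ⟩ : ∃ σ : ℕ → Formula, ∀ n, d n = Lmk Ax (σ n) := by
    refine ⟨fun n => (Quotient.exists_rep (d n)).choose, fun n => ?_⟩
    exact ((Quotient.exists_rep (d n)).choose_spec).symm
  have hd : d = fun n => Lmk Ax (σ n) := funext hσ
  rw [hd, eval_lind]
  apply Lmk_eq_top_iff.2
  apply Prf.ext
  rw [Set.mem_iUnion₂] at hψ ⊢
  obtain ⟨s, hs, h⟩ := hψ
  exact ⟨s, hs, instSet_substAll s σ h⟩


/-- Theorem 3.6: soundness and completeness of RmbC(Ax) w.r.t. BI(Ax),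
for `Ax` any set formed by one or more of the schemas (ciw),(ci),(cl),(cf),(ce),
(ca∧),(ca∨),(ca→): `Γ ⊢_{RmbC(Ax)} φ` iff `Γ ⊨_{BI(Ax)} φ`. -/
theorem rmbcAx_sound_complete (S : Set Schema) (hS : S.Nonempty)
    (Γ : Set Formula) (φ : Formula) :
    Deriv (⋃ s ∈ S, s.instSet) Γ φ ↔ BIConseqExt (⋃ s ∈ S, s.instSet) Γ φ := by
  set Ax : Set Formula := ⋃ s ∈ S, s.instSet with hAx
  constructor
  · rintro (h | ⟨γ, l, hγ, hl, h⟩)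
    · exact Or.inl (fun A _ nB cB hB hM d => soundness hB hM h d)
    · refine Or.inr ⟨γ, l, hγ, hl, fun A _ nB cB hB hM d => ?_⟩
      have := soundness hB hM h d
      rw [eval_imp', himp_eq_top_iff] at this
      exact this
  · rintro (h | ⟨γ, l, hγ, hl, h⟩)
    · left
      have hv := h (Lind Ax) (negL Ax) (circL Ax) lind_isBALFI (lind_modelsSet S)
        (fun n => Lmk Ax (.var n))
      rw [eval_lind, substAll_var] at hv
      exact Lmk_eq_top_iff.1 hv
    · refine Or.inr ⟨γ, l, hγ, hl, ?_⟩
      have hv := h (Lind Ax) (negL Ax) (circL Ax) lind_isBALFI (lind_modelsSet S)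
        (fun n => Lmk Ax (.var n))
      rw [eval_lind, substAll_var, eval_lind, substAll_var] at hv
      exact (Lle_iff).1 hv


end LFI
end

section
/- Soundness and completeness of RmbC(Ax) with respect to the neighborhood frames validating Ax: let Ax be a set formed by one or more of the axiom schemas (ciw), (ci), (cl), (cf), (ce). For every set of formulas Γ ∪ {φ} over Σ, Γ ⊢_{RmbC(Ax)} φ if and only if Γ ⊨_{NM(Ax)} φ. -/
namespace LFI

open Formula

/-- The denotation function of the neighborhood model `⟨⟨W, Sn, Sc⟩, d⟩` for RmbC. -/
def nden {W : Type} (Sn Sc : Set W → Set W) (d : ℕ → Set W) : Formula → Set W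
  | .var n => d n
  | .and a b => nden Sn Sc d a ∩ nden Sn Sc d b
  | .or a b => nden Sn Sc d a ∪ nden Sn Sc d b
  | .imp a b => (nden Sn Sc d a)ᶜ ∪ nden Sn Sc d b
  | .neg a => (nden Sn Sc d a)ᶜ ∪ Sn (nden Sn Sc d a)
  | .circ a =>
      (nden Sn Sc d a ∩ ((nden Sn Sc d a)ᶜ ∪ Sn (nden Sn Sc d a)))ᶜ ∩ Sc (nden Sn Sc d a)

/-- `φ` is valid w.r.t. neighborhood models: true (denotation = W) in every
neighborhood model over every nonempty set of worlds. -/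
def NMValid (φ : Formula) : Prop :=
  ∀ (W : Type), Nonempty W → ∀ (Sn Sc : Set W → Set W) (d : ℕ → Set W),
    nden Sn Sc d φ = Set.univ

/-- Local consequence w.r.t. neighborhood models: `Γ ⊨_NM φ` iff `⊨_NM φ`, or there is
a finite nonempty subset `{γ, γ₁,…,γₙ} ⊆ Γ` with `⊨_NM (γ ∧ γ₁ ∧ … ∧ γₙ) → φ`. -/
def NMConseq (Γ : Set Formula) (φ : Formula) : Prop :=
  NMValid φ ∨ ∃ (γ : Formula) (l : List Formula), γ ∈ Γ ∧ (∀ ψ ∈ l, ψ ∈ Γ) ∧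
    NMValid (Formula.imp (Formula.conjL γ l) φ)

/-- `φ` is valid in the neighborhood frame `⟨W, Sn, Sc⟩`: true in every model over it. -/
def ValidInFrame {W : Type} (Sn Sc : Set W → Set W) (φ : Formula) : Prop :=
  ∀ d : ℕ → Set W, nden Sn Sc d φ = Set.univ

/-- Validity over the class NM(Ax) of neighborhood frames validating every formula in `Ax`. -/
def NMValidExt (Ax : Set Formula) (φ : Formula) : Prop :=
  ∀ (W : Type), Nonempty W → ∀ Sn Sc : Set W → Set W,
    (∀ ψ ∈ Ax, ValidInFrame Sn Sc ψ) →
    ∀ d : ℕ → Set W, nden Sn Sc d φ = Set.univ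

/-- Local consequence over the class NM(Ax) of neighborhood frames validating `Ax`. -/
def NMConseqExt (Ax Γ : Set Formula) (φ : Formula) : Prop :=
  NMValidExt Ax φ ∨ ∃ (γ : Formula) (l : List Formula), γ ∈ Γ ∧ (∀ ψ ∈ l, ψ ∈ Γ) ∧
    NMValidExt Ax (Formula.imp (Formula.conjL γ l) φ)
/-!
Soundness is an induction on derivations. For completeness, take as worlds the theories
that are maximal among those not deriving some fixed formula, and write `⟦φ⟧` for the set
of worlds containing `φ`. The canonical `S¬` and `S∘` send `⟦φ⟧` to `⟦¬φ⟧` and `⟦∘φ⟧`,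
which is well defined by the replacement rules (R¬) and (R∘); on sets that are not of the
form `⟦φ⟧`, `S¬` is empty and `S∘` is everything, so that there `¬` acts as complement and
`∘` as the top element. By the truth lemma a non-theorem fails in this canonical model.
Each of (ciw), (ci), (cl), (cf), (ce) is valid in the canonical frame: on truth sets because
its instances are theorems, and on the remaining sets by the choice of `S¬` and `S∘`, except
that (ci) also needs `S¬ W = ∅`, which holds because (ci) makes `∘∘p` a theorem and `¬∘∘p`
inconsistent.
-/

section Soundness

variable {W : Type} {Sn Sc : Set W → Set W} {d : ℕ → Set W} {Ax : Set Formula}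

def negDen (Sn : Set W → Set W) (X : Set W) : Set W := Xᶜ ∪ Sn X

def circDen (Sn Sc : Set W → Set W) (X : Set W) : Set W := (X ∩ negDen Sn X)ᶜ ∩ Sc X

theorem nden_neg (a : Formula) : nden Sn Sc d (neg a) = negDen Sn (nden Sn Sc d a) := rfl

theorem nden_circ (a : Formula) : nden Sn Sc d (circ a) = circDen Sn Sc (nden Sn Sc d a) :=
  rfl

theorem nden_iffF_eq_univ {a b : Formula} :
    nden Sn Sc d (iffF a b) = Set.univ ↔ nden Sn Sc d a = nden Sn Sc d b := by
  simp only [iffF, nden, Set.ext_iff, Set.mem_inter_iff, Set.mem_union, Set.mem_compl_iff]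
  exact forall_congr' fun x => by tauto

theorem Prf.validInFrame (hAx : ∀ ψ ∈ Ax, ValidInFrame Sn Sc ψ) {ψ : Formula}
    (h : Prf Ax ψ) : ValidInFrame Sn Sc ψ := by
  induction h with
  | ext h => exact hAx _ h
  | mp _ _ ihab iha => exact fun d => by simpa [nden, iha d] using ihab d
  | rneg _ ih =>
    exact fun d => nden_iffF_eq_univ.mpr
      (by rw [nden_neg, nden_neg, nden_iffF_eq_univ.mp (ih d)])
  | rcirc _ ih =>
    exact fun d => nden_iffF_eq_univ.mpr
      (by rw [nden_circ, nden_circ, nden_iffF_eq_univ.mp (ih d)])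
  | _ =>
    intro d
    ext x
    simp only [nden, Set.mem_union, Set.mem_inter_iff, Set.mem_compl_iff,
      Set.mem_univ, iff_true]
    tauto

theorem Prf.nmValidExt {ψ : Formula} (h : Prf Ax ψ) : NMValidExt Ax ψ :=
  fun _ _ _ _ hAx => h.validInFrame hAx

end Soundness

variable {Ax Γ Γ' : Set Formula} {a b χ : Formula}

theorem Prf.imp_self (a : Formula) : Prf Ax (imp a a) :=
  ((Prf.ax2 a (imp a a) a).mp (Prf.ax1 a (imp a a))).mp (Prf.ax1 a a)

theorem Prf.and_intro (ha : Prf Ax a) (hb : Prf Ax b) : Prf Ax (and a b) :=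
  ((Prf.ax3 a b).mp ha).mp hb

inductive PrfFrom (Ax Γ : Set Formula) : Formula → Prop
  | thm {a : Formula} : Prf Ax a → PrfFrom Ax Γ a
  | prem {a : Formula} : a ∈ Γ → PrfFrom Ax Γ a
  | mp {a b : Formula} : PrfFrom Ax Γ (imp a b) → PrfFrom Ax Γ a → PrfFrom Ax Γ b

namespace PrfFrom

theorem imp_intro (h : PrfFrom Ax (insert a Γ) b) : PrfFrom Ax Γ (imp a b) := by
  induction h with
  | thm h => exact .mp (.thm (Prf.ax1 _ _)) (.thm h)
  | prem h =>
    rcases Set.mem_insert_iff.mp h with rfl | h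
    · exact .thm (Prf.imp_self _)
    · exact .mp (.thm (Prf.ax1 _ _)) (.prem h)
  | mp _ _ ihbc ihb => exact .mp (.mp (.thm (Prf.ax2 _ _ _)) ihbc) ihb

theorem mono (hΓ : Γ ⊆ Γ') (h : PrfFrom Ax Γ a) : PrfFrom Ax Γ' a := by
  induction h with
  | thm h => exact .thm h
  | prem h => exact .prem (hΓ h)
  | mp _ _ ihab iha => exact .mp ihab iha

theorem prf_of_empty (h : PrfFrom Ax ∅ a) : Prf Ax a := by
  induction h with
  | thm h => exact h
  | prem h => exact absurd h (Set.notMem_empty _)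
  | mp _ _ ihab iha => exact ihab.mp iha

theorem exists_finite (h : PrfFrom Ax Γ a) : ∃ s ⊆ Γ, s.Finite ∧ PrfFrom Ax s a := by
  induction h with
  | thm h => exact ⟨∅, Set.empty_subset _, Set.finite_empty, .thm h⟩
  | @prem a h => exact ⟨{a}, Set.singleton_subset_iff.mpr h, Set.finite_singleton a, .prem rfl⟩
  | mp _ _ ihab iha =>
    obtain ⟨s, hsΓ, hs, hab⟩ := ihab
    obtain ⟨t, htΓ, ht, ha⟩ := iha
    exact ⟨s ∪ t, Set.union_subset hsΓ htΓ, hs.union ht,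
      .mp (hab.mono Set.subset_union_left) (ha.mono Set.subset_union_right)⟩

end PrfFrom

theorem Prf.imp_of_prfFrom_singleton (h : PrfFrom Ax {a} b) : Prf Ax (imp a b) :=
  (PrfFrom.imp_intro (by rwa [insert_empty_eq])).prf_of_empty

def RelMaximal (Ax : Set Formula) (χ : Formula) (Δ : Set Formula) : Prop :=
  Maximal (fun Δ => ¬ PrfFrom Ax Δ χ) Δ

theorem exists_relMaximal (h : ¬ PrfFrom Ax Γ χ) :
    ∃ Δ, Γ ⊆ Δ ∧ RelMaximal Ax χ Δ := by
  refine zorn_subset_nonempty {Δ | ¬ PrfFrom Ax Δ χ}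
    (fun c hc hchain hne => ⟨⋃₀ c, fun hd => ?_, fun _ => Set.subset_sUnion_of_mem⟩) Γ h
  obtain ⟨s, hs, hfin, hd⟩ := hd.exists_finite
  obtain ⟨t, ht, hst⟩ :=
    hchain.directedOn.exists_mem_subset_of_finite_of_subset_sUnion hne hfin hs
  exact hc ht (hd.mono hst)

namespace RelMaximal

variable {Δ : Set Formula}

theorem not_prfFrom (hΔ : RelMaximal Ax χ Δ) : ¬ PrfFrom Ax Δ χ := hΔ.1

theorem prfFrom_insert (hΔ : RelMaximal Ax χ Δ) (ha : a ∉ Δ) :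
    PrfFrom Ax (insert a Δ) χ := by
  by_contra h
  exact ha (hΔ.2 h (Set.subset_insert a Δ) (Set.mem_insert a Δ))

theorem mem_of_prfFrom (hΔ : RelMaximal Ax χ Δ) (h : PrfFrom Ax Δ a) : a ∈ Δ := by
  by_contra ha
  exact hΔ.not_prfFrom (.mp (hΔ.prfFrom_insert ha).imp_intro h)

theorem mem_of_prf (hΔ : RelMaximal Ax χ Δ) (h : Prf Ax a) : a ∈ Δ :=
  hΔ.mem_of_prfFrom (.thm h)

theorem mem_of_imp_mem (hΔ : RelMaximal Ax χ Δ) (h : imp a b ∈ Δ) (ha : a ∈ Δ) :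
    b ∈ Δ :=
  hΔ.mem_of_prfFrom (.mp (.prem h) (.prem ha))

theorem and_mem_iff (hΔ : RelMaximal Ax χ Δ) : and a b ∈ Δ ↔ a ∈ Δ ∧ b ∈ Δ :=
  ⟨fun h => ⟨hΔ.mem_of_imp_mem (hΔ.mem_of_prf (.ax4 a b)) h,
      hΔ.mem_of_imp_mem (hΔ.mem_of_prf (.ax5 a b)) h⟩,
    fun ⟨ha, hb⟩ => hΔ.mem_of_imp_mem (hΔ.mem_of_imp_mem (hΔ.mem_of_prf (.ax3 a b)) ha) hb⟩

theorem or_mem_iff (hΔ : RelMaximal Ax χ Δ) : or a b ∈ Δ ↔ a ∈ Δ ∨ b ∈ Δ := by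
  refine ⟨fun h => ?_, ?_⟩
  · by_contra! hab
    have hac := (hΔ.prfFrom_insert hab.1).imp_intro
    have hbc := (hΔ.prfFrom_insert hab.2).imp_intro
    exact hΔ.not_prfFrom (.mp (.mp (.mp (.thm (.ax8 a b χ)) hac) hbc) (.prem h))
  · rintro (h | h)
    · exact hΔ.mem_of_imp_mem (hΔ.mem_of_prf (.ax6 a b)) h
    · exact hΔ.mem_of_imp_mem (hΔ.mem_of_prf (.ax7 a b)) h

theorem imp_mem_iff (hΔ : RelMaximal Ax χ Δ) : imp a b ∈ Δ ↔ (a ∈ Δ → b ∈ Δ) := by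
  refine ⟨hΔ.mem_of_imp_mem, fun h => ?_⟩
  rcases hΔ.or_mem_iff.mp (hΔ.mem_of_prf (.ax9 a b)) with hab | ha
  · exact hab
  · exact hΔ.mem_of_imp_mem (hΔ.mem_of_prf (.ax1 b a)) (h ha)

theorem mem_or_neg_mem (hΔ : RelMaximal Ax χ Δ) : a ∈ Δ ∨ neg a ∈ Δ :=
  hΔ.or_mem_iff.mp (hΔ.mem_of_prf (.ax10 a))

theorem neg_notMem_of_circ_mem (hΔ : RelMaximal Ax χ Δ) (hc : circ a ∈ Δ) (ha : a ∈ Δ) :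
    neg a ∉ Δ := fun hn =>
  hΔ.not_prfFrom (.prem (hΔ.mem_of_imp_mem
    (hΔ.mem_of_imp_mem (hΔ.mem_of_imp_mem (hΔ.mem_of_prf (.bc1 a χ)) hc) ha) hn))

end RelMaximal

def CanonWorld (Ax : Set Formula) : Type := {Δ : Set Formula // ∃ χ, RelMaximal Ax χ Δ}

def truthSet (Ax : Set Formula) (φ : Formula) : Set (CanonWorld Ax) := {Δ | φ ∈ Δ.1}

section TruthSet

theorem truthSet_and : truthSet Ax (and a b) = truthSet Ax a ∩ truthSet Ax b := by
  ext ⟨Δ, χ, hΔ⟩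
  exact hΔ.and_mem_iff

theorem truthSet_or : truthSet Ax (or a b) = truthSet Ax a ∪ truthSet Ax b := by
  ext ⟨Δ, χ, hΔ⟩
  exact hΔ.or_mem_iff

theorem truthSet_imp : truthSet Ax (imp a b) = (truthSet Ax a)ᶜ ∪ truthSet Ax b := by
  ext ⟨Δ, χ, hΔ⟩
  exact hΔ.imp_mem_iff.trans imp_iff_not_or

theorem truthSet_subset_of_prf (h : Prf Ax (imp a b)) : truthSet Ax a ⊆ truthSet Ax b :=
  fun ⟨_, _, hΔ⟩ ha => hΔ.mem_of_imp_mem (hΔ.mem_of_prf h) ha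

theorem truthSet_eq_univ_of_prf (h : Prf Ax a) : truthSet Ax a = Set.univ :=
  Set.eq_univ_of_forall fun ⟨_, _, hΔ⟩ => hΔ.mem_of_prf h

theorem compl_subset_truthSet_neg : (truthSet Ax a)ᶜ ⊆ truthSet Ax (neg a) :=
  fun ⟨_, _, hΔ⟩ ha => hΔ.mem_or_neg_mem.resolve_left ha

theorem truthSet_inter_neg_inter_circ :
    truthSet Ax a ∩ truthSet Ax (neg a) ∩ truthSet Ax (circ a) = ∅ :=
  Set.eq_empty_of_forall_notMem fun ⟨_, _, hΔ⟩ ⟨⟨ha, hn⟩, hc⟩ =>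
    hΔ.neg_notMem_of_circ_mem hc ha hn

def falsum : Formula := and (circ (var 0)) (and (var 0) (neg (var 0)))

theorem truthSet_falsum : truthSet Ax falsum = ∅ := by
  rw [falsum, truthSet_and, truthSet_and, Set.inter_comm, truthSet_inter_neg_inter_circ]

theorem compl_truthSet : (truthSet Ax a)ᶜ = truthSet Ax (imp a falsum) := by
  rw [truthSet_imp, truthSet_falsum, Set.union_empty]

theorem exists_world_notMem (h : ¬ PrfFrom Ax Γ χ) :
    ∃ Δ : CanonWorld Ax, Γ ⊆ Δ.1 ∧ χ ∉ Δ.1 := by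
  obtain ⟨Δ, hΓΔ, hΔ⟩ := exists_relMaximal h
  exact ⟨⟨Δ, χ, hΔ⟩, hΓΔ, fun hχ => hΔ.not_prfFrom (.prem hχ)⟩

theorem prf_imp_of_truthSet_subset (h : truthSet Ax a ⊆ truthSet Ax b) : Prf Ax (imp a b) := by
  by_contra hab
  obtain ⟨Δ, haΔ, hbΔ⟩ := exists_world_notMem (Γ := {a}) (χ := b)
    fun hd => hab (Prf.imp_of_prfFrom_singleton hd)
  exact hbΔ (h (haΔ (Set.mem_singleton a)))

theorem truthSet_eq_iff : truthSet Ax a = truthSet Ax b ↔ Prf Ax (iffF a b) := by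
  refine ⟨fun h => (prf_imp_of_truthSet_subset h.le).and_intro
    (prf_imp_of_truthSet_subset h.ge), fun h => ?_⟩
  exact (truthSet_subset_of_prf ((Prf.ax4 _ _).mp h)).antisymm
    (truthSet_subset_of_prf ((Prf.ax5 _ _).mp h))

theorem truthSet_neg_congr (h : truthSet Ax a = truthSet Ax b) :
    truthSet Ax (neg a) = truthSet Ax (neg b) :=
  truthSet_eq_iff.mpr (.rneg (truthSet_eq_iff.mp h))

theorem truthSet_circ_congr (h : truthSet Ax a = truthSet Ax b) :
    truthSet Ax (circ a) = truthSet Ax (circ b) :=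
  truthSet_eq_iff.mpr (.rcirc (truthSet_eq_iff.mp h))

end TruthSet

def canonSn (Ax : Set Formula) (X : Set (CanonWorld Ax)) : Set (CanonWorld Ax) :=
  {Δ | ∃ φ, truthSet Ax φ = X ∧ neg φ ∈ Δ.1}

def canonSc (Ax : Set Formula) (X : Set (CanonWorld Ax)) : Set (CanonWorld Ax) :=
  {Δ | ∀ φ, truthSet Ax φ = X → circ φ ∈ Δ.1}

section CanonicalFrame

variable {X : Set (CanonWorld Ax)}

theorem canonSn_truthSet : canonSn Ax (truthSet Ax a) = truthSet Ax (neg a) := by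
  ext Δ
  exact ⟨fun ⟨_, hφ, hnφ⟩ => (truthSet_neg_congr hφ).le hnφ, fun hna => ⟨a, rfl, hna⟩⟩

theorem canonSc_truthSet : canonSc Ax (truthSet Ax a) = truthSet Ax (circ a) := by
  ext Δ
  exact ⟨fun h => h a rfl, fun hca φ hφ => (truthSet_circ_congr hφ).ge hca⟩

theorem canonSn_of_notMem_range (hX : X ∉ Set.range (truthSet Ax)) : canonSn Ax X = ∅ :=
  Set.eq_empty_of_forall_notMem fun _ ⟨φ, hφ, _⟩ => hX ⟨φ, hφ⟩

theorem canonSc_of_notMem_range (hX : X ∉ Set.range (truthSet Ax)) :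
    canonSc Ax X = Set.univ :=
  Set.eq_univ_of_forall fun _ φ hφ => absurd ⟨φ, hφ⟩ hX

theorem compl_notMem_range (hX : X ∉ Set.range (truthSet Ax)) :
    Xᶜ ∉ Set.range (truthSet Ax) := fun ⟨φ, hφ⟩ =>
  hX ⟨imp φ falsum, by rw [← compl_truthSet, hφ, compl_compl]⟩

theorem negDen_canonSn_truthSet :
    negDen (canonSn Ax) (truthSet Ax a) = truthSet Ax (neg a) := by
  rw [negDen, canonSn_truthSet, Set.union_eq_self_of_subset_left compl_subset_truthSet_neg]

theorem circDen_canon_truthSet :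
    circDen (canonSn Ax) (canonSc Ax) (truthSet Ax a) = truthSet Ax (circ a) := by
  rw [circDen, negDen_canonSn_truthSet, canonSc_truthSet, Set.inter_eq_right]
  exact Set.subset_compl_iff_disjoint_left.mpr
    (Set.disjoint_iff_inter_eq_empty.mpr truthSet_inter_neg_inter_circ)

theorem negDen_canonSn_of_notMem_range (hX : X ∉ Set.range (truthSet Ax)) :
    negDen (canonSn Ax) X = Xᶜ := by
  rw [negDen, canonSn_of_notMem_range hX, Set.union_empty]

theorem circDen_canon_of_notMem_range (hX : X ∉ Set.range (truthSet Ax)) :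
    circDen (canonSn Ax) (canonSc Ax) X = Set.univ := by
  rw [circDen, negDen_canonSn_of_notMem_range hX, canonSc_of_notMem_range hX,
    Set.inter_compl_self, Set.compl_empty, Set.univ_inter]

theorem nden_canon_truthSet (φ : Formula) :
    nden (canonSn Ax) (canonSc Ax) (fun n => truthSet Ax (var n)) φ = truthSet Ax φ := by
  induction φ with
  | var n => rfl
  | and a b iha ihb => rw [nden, iha, ihb, truthSet_and]
  | or a b iha ihb => rw [nden, iha, ihb, truthSet_or]
  | imp a b iha ihb => rw [nden, iha, ihb, truthSet_imp]
  | neg a iha => rw [nden_neg, iha, negDen_canonSn_truthSet]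
  | circ a iha => rw [nden_circ, iha, circDen_canon_truthSet]

theorem prf_of_nmValidExt (hcan : ∀ ψ ∈ Ax, ValidInFrame (canonSn Ax) (canonSc Ax) ψ)
    {ψ : Formula} (h : NMValidExt Ax ψ) : Prf Ax ψ := by
  by_contra hψ
  obtain ⟨Δ, -, hψΔ⟩ := exists_world_notMem (Γ := ∅) fun hd => hψ hd.prf_of_empty
  have hvalid := h _ ⟨Δ⟩ _ _ hcan fun n => truthSet Ax (var n)
  rw [nden_canon_truthSet] at hvalid
  exact hψΔ (hvalid ▸ Set.mem_univ Δ : Δ ∈ truthSet Ax ψ)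

end CanonicalFrame

section Schemas

theorem truthSet_neg_circ_circ_eq_empty
    (hci : ∀ c, Prf Ax (imp (neg (circ c)) (and c (neg c)))) :
    truthSet Ax (neg (circ (circ a))) = ∅ := by
  have hcirc := truthSet_subset_of_prf (hci (circ a))
  have ha := truthSet_subset_of_prf (hci a)
  rw [truthSet_and] at hcirc ha
  refine Set.eq_empty_of_forall_notMem fun Δ hΔ => ?_
  obtain ⟨hca, hnca⟩ := hcirc hΔ
  obtain ⟨ha, hna⟩ := ha hnca
  exact (truthSet_inter_neg_inter_circ (a := a)).subset ⟨⟨ha, hna⟩, hca⟩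

theorem truthSet_circ_circ_eq_univ (hci : ∀ c, Prf Ax (imp (neg (circ c)) (and c (neg c)))) :
    truthSet Ax (circ (circ a)) = Set.univ :=
  Set.compl_empty_iff.mp (Set.subset_empty_iff.mp
    (truthSet_neg_circ_circ_eq_empty hci ▸ compl_subset_truthSet_neg))

theorem negDen_canonSn_univ (hci : ∀ c, Prf Ax (imp (neg (circ c)) (and c (neg c)))) :
    negDen (canonSn Ax) Set.univ = ∅ := by
  rw [← truthSet_circ_circ_eq_univ hci (a := var 0), negDen_canonSn_truthSet,
    truthSet_neg_circ_circ_eq_empty hci]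

variable (X : Set (CanonWorld Ax))

theorem canonical_ciw (h : ∀ a, Prf Ax (or (circ a) (and a (neg a)))) :
    circDen (canonSn Ax) (canonSc Ax) X ∪ (X ∩ negDen (canonSn Ax) X) = Set.univ := by
  by_cases hX : X ∈ Set.range (truthSet Ax)
  · obtain ⟨φ, rfl⟩ := hX
    rw [circDen_canon_truthSet, negDen_canonSn_truthSet, ← truthSet_and, ← truthSet_or]
    exact truthSet_eq_univ_of_prf (h φ)
  · rw [circDen_canon_of_notMem_range hX, Set.univ_union]

theorem canonical_ci (h : ∀ a, Prf Ax (imp (neg (circ a)) (and a (neg a)))) :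
    (negDen (canonSn Ax) (circDen (canonSn Ax) (canonSc Ax) X))ᶜ ∪
      (X ∩ negDen (canonSn Ax) X) = Set.univ := by
  by_cases hX : X ∈ Set.range (truthSet Ax)
  · obtain ⟨φ, rfl⟩ := hX
    rw [circDen_canon_truthSet, negDen_canonSn_truthSet, negDen_canonSn_truthSet,
      ← truthSet_and, ← truthSet_imp]
    exact truthSet_eq_univ_of_prf (h φ)
  · rw [circDen_canon_of_notMem_range hX, negDen_canonSn_univ h, Set.compl_empty,
      Set.univ_union]

theorem canonical_cl (h : ∀ a, Prf Ax (imp (neg (and a (neg a))) (circ a))) :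
    (negDen (canonSn Ax) (X ∩ negDen (canonSn Ax) X))ᶜ ∪
      circDen (canonSn Ax) (canonSc Ax) X = Set.univ := by
  by_cases hX : X ∈ Set.range (truthSet Ax)
  · obtain ⟨φ, rfl⟩ := hX
    rw [negDen_canonSn_truthSet, ← truthSet_and, negDen_canonSn_truthSet,
      circDen_canon_truthSet, ← truthSet_imp]
    exact truthSet_eq_univ_of_prf (h φ)
  · rw [circDen_canon_of_notMem_range hX, Set.union_univ]

theorem canonical_cf (h : ∀ a, Prf Ax (imp (neg (neg a)) a)) :
    (negDen (canonSn Ax) (negDen (canonSn Ax) X))ᶜ ∪ X = Set.univ := by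
  by_cases hX : X ∈ Set.range (truthSet Ax)
  · obtain ⟨φ, rfl⟩ := hX
    rw [negDen_canonSn_truthSet, negDen_canonSn_truthSet, ← truthSet_imp]
    exact truthSet_eq_univ_of_prf (h φ)
  · rw [negDen_canonSn_of_notMem_range hX,
      negDen_canonSn_of_notMem_range (compl_notMem_range hX), compl_compl,
      Set.compl_union_self]

theorem canonical_ce (h : ∀ a, Prf Ax (imp a (neg (neg a)))) :
    Xᶜ ∪ negDen (canonSn Ax) (negDen (canonSn Ax) X) = Set.univ := by
  by_cases hX : X ∈ Set.range (truthSet Ax)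
  · obtain ⟨φ, rfl⟩ := hX
    rw [negDen_canonSn_truthSet, negDen_canonSn_truthSet, ← truthSet_imp]
    exact truthSet_eq_univ_of_prf (h φ)
  · rw [negDen_canonSn_of_notMem_range hX,
      negDen_canonSn_of_notMem_range (compl_notMem_range hX), compl_compl,
      Set.compl_union_self]

end Schemas

theorem canonical_validInFrame_instSet {s : Schema}
    (hs : s ∈ ({.ciw, .ci, .cl, .cf, .ce} : Set Schema)) (hAx : s.instSet ⊆ Ax) :
    ∀ ψ ∈ s.instSet, ValidInFrame (canonSn Ax) (canonSc Ax) ψ := by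
  have hprf : ∀ ψ ∈ s.instSet, Prf Ax ψ := fun ψ hψ => .ext (hAx hψ)
  rcases hs with rfl | rfl | rfl | rfl | rfl <;> rintro _ ⟨a, rfl⟩ d
  · exact canonical_ciw _ fun b => hprf _ ⟨b, rfl⟩
  · exact canonical_ci _ fun b => hprf _ ⟨b, rfl⟩
  · exact canonical_cl _ fun b => hprf _ ⟨b, rfl⟩
  · exact canonical_cf _ fun b => hprf _ ⟨b, rfl⟩
  · exact canonical_ce _ fun b => hprf _ ⟨b, rfl⟩

theorem deriv_iff_nmConseqExt (h : ∀ ψ, Prf Ax ψ ↔ NMValidExt Ax ψ) (Γ : Set Formula)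
    (φ : Formula) : Deriv Ax Γ φ ↔ NMConseqExt Ax Γ φ :=
  or_congr (h φ) (exists_congr fun _ => exists_congr fun _ =>
    and_congr_right fun _ => and_congr_right fun _ => h _)

theorem rmbcAx_nbhd_sound_complete_general (S : Set Schema)
    (hsub : S ⊆ {Schema.ciw, Schema.ci, Schema.cl, Schema.cf, Schema.ce})
    (Γ : Set Formula) (φ : Formula) :
    Deriv (⋃ s ∈ S, s.instSet) Γ φ ↔ NMConseqExt (⋃ s ∈ S, s.instSet) Γ φ := by
  set Ax := ⋃ s ∈ S, s.instSet
  have hcan : ∀ ψ ∈ Ax, ValidInFrame (canonSn Ax) (canonSc Ax) ψ := fun ψ hψ => by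
    obtain ⟨s, hs, hψs⟩ := Set.mem_iUnion₂.mp hψ
    exact canonical_validInFrame_instSet (hsub hs) (Set.subset_biUnion_of_mem hs) ψ hψs
  exact deriv_iff_nmConseqExt (fun ψ => ⟨Prf.nmValidExt, prf_of_nmValidExt hcan⟩) Γ φ

/-- Theorem 5.16: soundness and completeness of RmbC(Ax) w.r.t. the
class NM(Ax) of neighborhood frames validating Ax, where Ax is formed by one or more
of the schemas (ciw),(ci),(cl),(cf),(ce): `Γ ⊢_{RmbC(Ax)} φ` iff `Γ ⊨_{NM(Ax)} φ`. -/
theorem rmbcAx_nbhd_sound_complete (S : Set Schema) (hS : S.Nonempty)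
    (hsub : S ⊆ {Schema.ciw, Schema.ci, Schema.cl, Schema.cf, Schema.ce})
    (Γ : Set Formula) (φ : Formula) :
    Deriv (⋃ s ∈ S, s.instSet) Γ φ ↔ NMConseqExt (⋃ s ∈ S, s.instSet) Γ φ :=
  rmbcAx_nbhd_sound_complete_general S hsub Γ φ

end LFI
end
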